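/- For every natural number m ≥ 1, ∑_{n=1}^{m} (1/(n+1)) · ( ∑_{j=1}^{n} (-1)^{j-1} · binom(2j-1, j) · binom(m+j, 2j-1) ) = (-1)^{m+1} · H_m, where H_m = ∑_{i=1}^{m} 1/i. -/

import Mathlib

open Finset Polynomial

def H (n : ℕ) : ℚ := ∑ i ∈ Finset.Icc 1 n, (1 : ℚ) / i

lemma Hsucc (n : ℕ) : H (n + 1) = H n + 1 / ((n : ℚ) + 1) := by
  unfold H
  rw [Finset.sum_Icc_succ_top (by omega)]
  push_cast; ring

lemma Hdiff (a b : ℕ) : H (a + b) = H a + ∑ i ∈ range b, 1 / ((a : ℚ) + i + 1) := by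
  induction b with
  | zero => simp
  | succ b ih =>
    rw [← Nat.add_assoc, Hsucc, ih, sum_range_succ]
    push_cast; ring

lemma prod_asc (t b : ℕ) :
    ∏ i ∈ range b, ((t : ℚ) + i + 1) = ((t + b).factorial : ℚ) / (t.factorial : ℚ) := by
  induction b with
  | zero => simp [div_self (show (t.factorial:ℚ) ≠ 0 by positivity)]
  | succ b ih =>
    rw [prod_range_succ, ih, ← Nat.add_assoc, Nat.factorial_succ]
    have h1 : (t.factorial : ℚ) ≠ 0 := by positivity
    field_simp
    push_cast; ring

lemma prod_desc (a : ℕ) : ∀ b : ℕ, b ≤ a →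
    ∏ i ∈ range b, ((a : ℚ) - i) = (a.factorial : ℚ) / ((a - b).factorial : ℚ) := by
  intro b
  induction b with
  | zero => intro _; simp [div_self (show (a.factorial:ℚ) ≠ 0 by positivity)]
  | succ b ih =>
    intro hb
    rw [prod_range_succ, ih (by omega)]
    have h2 : a - b = (a - (b + 1)) + 1 := by omega
    have h3 : ((a - b : ℕ) : ℚ) = (a : ℚ) - b := by
      have : ((a - b : ℕ) : ℚ) = ((a : ℕ) : ℚ) - ((b : ℕ) : ℚ) := by
        rw [Nat.cast_sub (by omega)]
      exact this
    rw [h2, Nat.factorial_succ]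
    have h4 : (((a - (b+1)).factorial : ℕ) : ℚ) ≠ 0 := by positivity
    have h5 : ((a - (b+1) : ℕ) : ℚ) + 1 = (a : ℚ) - b := by
      rw [Nat.cast_sub (by omega)]; push_cast; ring
    rw [div_mul_eq_mul_div, div_eq_div_iff (by positivity) (by positivity)]
    push_cast
    rw [← h5]
    ring

lemma choose_form {a b : ℕ} (h : b ≤ a) :
    ((a.choose b : ℕ) : ℚ) * (b.factorial : ℚ) = (a.factorial : ℚ) / ((a - b).factorial : ℚ) := by
  have := Nat.choose_mul_factorial_mul_factorial h
  have hcast : ((a.choose b : ℕ) : ℚ) * (b.factorial : ℚ) * ((a-b).factorial : ℚ) = (a.factorial : ℚ) := by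
    exact_mod_cast congrArg (Nat.cast : ℕ → ℚ) this
  have h4 : (((a - b).factorial : ℕ) : ℚ) ≠ 0 := by positivity
  field_simp [← hcast]
  exact hcast

lemma eval_derivative_prod (s : Finset ℕ) (c : ℕ → ℚ) (x : ℚ)
    (h : ∀ i ∈ s, x + c i ≠ 0) :
    eval x (derivative (∏ i ∈ s, (X + C (c i)))) =
      (∏ i ∈ s, (x + c i)) * ∑ i ∈ s, (x + c i)⁻¹ := by
  induction s using Finset.induction with
  | empty => simp
  | insert a s ha ih =>
    rw [prod_insert ha, derivative_mul, eval_add, eval_mul, eval_mul,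
      prod_insert ha, sum_insert ha, ih (fun i hi => h i (mem_insert_of_mem hi))]
    simp only [derivative_add, derivative_X, derivative_C, add_zero, eval_one, eval_add,
      eval_X, eval_C, eval_prod]
    have hx : x + c a ≠ 0 := h a (mem_insert_self a s)
    field_simp

lemma Qid (m : ℕ) : ∀ n a : ℕ,
    ∑ k ∈ range (m + 1), (-1 : ℚ) ^ k * (m.choose k : ℚ) * ((n + k + a).choose (k + a) : ℚ)
      = (-1 : ℚ) ^ m * ((n + a).choose (m + a) : ℚ) := by
  induction m with
  | zero => intro n a; simp
  | succ m ih =>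
    intro n a
    rw [Finset.sum_range_succ' _ (m + 1)]
    have split : ∀ k, ((m+1).choose (k+1) : ℚ) = (m.choose k : ℚ) + (m.choose (k+1) : ℚ) := by
      intro k; exact_mod_cast congrArg (Nat.cast : ℕ → ℚ) (Nat.choose_succ_succ m k)
    have e1 : ∑ k ∈ range (m + 1),
        (-1 : ℚ) ^ (k+1) * ((m+1).choose (k+1) : ℚ) * ((n + (k+1) + a).choose ((k+1) + a) : ℚ)
        = (∑ k ∈ range (m + 1),
            (-1 : ℚ) ^ (k+1) * (m.choose (k+1) : ℚ) * ((n + (k+1) + a).choose ((k+1) + a) : ℚ))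
          + ∑ k ∈ range (m + 1),
            (-1 : ℚ) ^ (k+1) * (m.choose k : ℚ) * ((n + k + (a+1)).choose (k + (a+1)) : ℚ) := by
      rw [← Finset.sum_add_distrib]
      refine Finset.sum_congr rfl fun k _ => ?_
      rw [split k]
      have hA : n + (k+1) + a = n + k + (a+1) := by omega
      have hB : (k+1) + a = k + (a+1) := by omega
      rw [hA, hB]; ring
    rw [e1]
    have e2 : (∑ k ∈ range (m + 1),
        (-1 : ℚ) ^ (k+1) * (m.choose (k+1) : ℚ) * ((n + (k+1) + a).choose ((k+1) + a) : ℚ))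
        + (-1:ℚ)^0 * ((m+1).choose 0 : ℚ) * ((n + 0 + a).choose (0+a) : ℚ)
        = ∑ k ∈ range (m + 1), (-1 : ℚ) ^ k * (m.choose k : ℚ) * ((n + k + a).choose (k + a) : ℚ) := by
      rw [Finset.sum_range_succ (fun k => (-1 : ℚ) ^ (k+1) * (m.choose (k+1) : ℚ) * ((n + (k+1) + a).choose ((k+1) + a) : ℚ)) m,
          Finset.sum_range_succ' (fun k => (-1 : ℚ) ^ k * (m.choose k : ℚ) * ((n + k + a).choose (k + a) : ℚ)) m,
          Nat.choose_succ_self m]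
      simp only [Nat.choose_zero_right, Nat.cast_one, Nat.cast_zero, mul_zero, zero_mul, one_mul]
      ring
    have e3 : ∑ k ∈ range (m + 1),
        (-1 : ℚ) ^ (k+1) * (m.choose k : ℚ) * ((n + k + (a+1)).choose (k + (a+1)) : ℚ)
        = - ((-1 : ℚ) ^ m * ((n + (a+1)).choose (m + (a+1)) : ℚ)) := by
      rw [← ih n (a+1)]
      rw [← Finset.sum_neg_distrib]
      refine Finset.sum_congr rfl fun k _ => ?_
      ring
    calc _ = (∑ k ∈ range (m + 1),
        (-1 : ℚ) ^ (k+1) * (m.choose (k+1) : ℚ) * ((n + (k+1) + a).choose ((k+1) + a) : ℚ)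
        + (-1:ℚ)^0 * ((m+1).choose 0 : ℚ) * ((n + 0 + a).choose (0+a) : ℚ))
        + ∑ k ∈ range (m + 1),
            (-1 : ℚ) ^ (k+1) * (m.choose k : ℚ) * ((n + k + (a+1)).choose (k + (a+1)) : ℚ) := by ring
      _ = (-1 : ℚ) ^ m * ((n + a).choose (m + a) : ℚ)
            - (-1 : ℚ) ^ m * ((n + (a+1)).choose (m + (a+1)) : ℚ) := by
          rw [e2, e3, ih n a]; ring
      _ = (-1 : ℚ) ^ (m+1) * ((n + a).choose (m + 1 + a) : ℚ) := by
          have pas : ((n + (a+1)).choose (m + (a+1)) : ℚ)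
              = ((n + a).choose (m + a) : ℚ) + ((n + a).choose (m + a + 1) : ℚ) := by
            have h1 : n + (a+1) = (n + a) + 1 := by ring
            have h2 : m + (a+1) = (m + a) + 1 := by ring
            rw [h1, h2]
            exact_mod_cast congrArg (Nat.cast : ℕ → ℚ) (Nat.choose_succ_succ (n+a) (m+a))
          rw [pas]
          have : m + 1 + a = m + a + 1 := by ring
          rw [this]
          ring

lemma polyB (m : ℕ) :
    (∑ k ∈ range (m + 1), C ((-1 : ℚ) ^ k * (m.choose k : ℚ) / ((k+1).factorial : ℚ)) *
        ∏ i ∈ range (k + 1), (X + C ((i : ℚ) + 1)))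
      = C ((-1 : ℚ) ^ m / ((m+1).factorial : ℚ)) * ∏ i ∈ range (m + 1), (X + C (1 - (i : ℚ))) := by
  apply Polynomial.eq_of_infinite_eval_eq
  apply Set.infinite_of_injective_forall_mem
    (f := fun t : ℕ => ((m + t : ℕ) : ℚ))
  · intro x y hxy
    simpa using hxy
  · intro t
    simp only [Set.mem_setOf_eq, eval_finset_sum, eval_mul, eval_C, eval_prod, eval_add, eval_X]
    set T : ℕ := m + t with hT
    have hmT : m ≤ T := by omega
    have hL : ∀ k, ∏ i ∈ range (k + 1), ((T : ℚ) + ((i : ℚ) + 1))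
        = ((T + (k+1)).choose (k+1) : ℚ) * ((k+1).factorial : ℚ) := by
      intro k
      have := prod_asc T (k+1)
      have h2 := choose_form (show k+1 ≤ T + (k+1) by omega)
      simp only [Nat.add_sub_cancel] at h2
      rw [h2, ← this]
      · exact Finset.prod_congr rfl fun i _ => by push_cast; ring
    have hR : ∏ i ∈ range (m + 1), ((T : ℚ) + (1 - (i : ℚ)))
        = ((T + 1).choose (m+1) : ℚ) * ((m+1).factorial : ℚ) := by
      have h1 : ∏ i ∈ range (m + 1), ((T : ℚ) + (1 - (i : ℚ)))
          = ∏ i ∈ range (m + 1), (((T + 1 : ℕ) : ℚ) - (i : ℚ)) := by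
        refine Finset.prod_congr rfl fun i _ => by push_cast; ring
      rw [h1, prod_desc (T+1) (m+1) (by omega), choose_form (show m+1 ≤ T+1 by omega)]
    calc ∑ k ∈ range (m + 1), (-1 : ℚ) ^ k * (m.choose k : ℚ) / ((k+1).factorial : ℚ) *
            ∏ i ∈ range (k + 1), ((T : ℚ) + ((i : ℚ) + 1))
        = ∑ k ∈ range (m + 1), (-1 : ℚ) ^ k * (m.choose k : ℚ) * ((T + k + 1).choose (k + 1) : ℚ) := by
          refine Finset.sum_congr rfl fun k _ => ?_
          rw [hL k]
          have hfac : ((k+1).factorial : ℚ) ≠ 0 := by positivity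
          have : T + (k+1) = T + k + 1 := by omega
          rw [this]
          have key : ∀ (a b c : ℚ), c ≠ 0 → a / c * (b * c) = a * b := by
            intros a b c hc; field_simp
          exact key _ _ _ hfac
      _ = (-1 : ℚ) ^ m * ((T + 1).choose (m + 1) : ℚ) := Qid m T 1
      _ = (-1 : ℚ) ^ m / ((m+1).factorial : ℚ) * ∏ i ∈ range (m + 1), ((T : ℚ) + (1 - (i : ℚ))) := by
          rw [hR]
          have hfac : ((m+1).factorial : ℚ) ≠ 0 := by positivity
          field_simp

lemma polyA (m : ℕ) :
    (∑ k ∈ range (m + 1), C ((-1 : ℚ) ^ k * (m.choose k : ℚ)) *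
        ∏ i ∈ range m, (X + C ((k : ℚ) - (i : ℚ))))
      = C ((-1 : ℚ) ^ m * (m.factorial : ℚ)) := by
  apply Polynomial.eq_of_infinite_eval_eq
  apply Set.infinite_of_injective_forall_mem
    (f := fun t : ℕ => ((m + t : ℕ) : ℚ))
  · intro x y hxy
    simpa using hxy
  · intro t
    simp only [Set.mem_setOf_eq, eval_finset_sum, eval_mul, eval_C, eval_prod, eval_add, eval_X]
    set T : ℕ := m + t with hT
    have hmT : m ≤ T := by omega
    have hL : ∀ k : ℕ, ∏ i ∈ range m, ((T : ℚ) + ((k : ℚ) - (i : ℚ)))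
        = ((T + k).choose m : ℚ) * (m.factorial : ℚ) := by
      intro k
      have h1 : ∏ i ∈ range m, ((T : ℚ) + ((k : ℚ) - (i : ℚ)))
          = ∏ i ∈ range m, (((T + k : ℕ) : ℚ) - (i : ℚ)) := by
        refine Finset.prod_congr rfl fun i _ => by push_cast; ring
      rw [h1, prod_desc (T + k) m (by omega), choose_form (show m ≤ T + k by omega)]
    have key : ∀ k, k ∈ range (m+1) → ((T + k).choose m : ℚ) = ((m + k + (T - m)).choose (k + (T - m)) : ℚ) := by
      intro k _
      have h1 : m + k + (T - m) = T + k := by omega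
      have h2 : (T + k).choose (k + (T - m)) = (T + k).choose m := by
        have h3 : k + (T - m) = (T + k) - m := by omega
        rw [h3, Nat.choose_symm (by omega)]
      rw [h1, h2]
    calc ∑ k ∈ range (m + 1), (-1 : ℚ) ^ k * (m.choose k : ℚ) *
            ∏ i ∈ range m, ((T : ℚ) + ((k : ℚ) - (i : ℚ)))
        = (∑ k ∈ range (m + 1), (-1 : ℚ) ^ k * (m.choose k : ℚ) *
            ((m + k + (T - m)).choose (k + (T - m)) : ℚ)) * (m.factorial : ℚ) := by
          rw [Finset.sum_mul]
          refine Finset.sum_congr rfl fun k hk => ?_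
          rw [hL k, key k hk]; ring
      _ = (-1 : ℚ) ^ m * (m.factorial : ℚ) := by
          rw [Qid m m (T - m)]
          have : (m + (T - m)).choose (m + (T - m)) = 1 := Nat.choose_self _
          rw [this]
          simp

lemma idA (m : ℕ) :
    ∑ k ∈ range (m + 1), (-1 : ℚ) ^ k * (m.choose k : ℚ) * ((m + k + 1).choose (k + 1) : ℚ)
      * (H (m + k + 1) - H (k + 1)) = 0 := by
  have h := congrArg (fun p => eval ((m : ℚ) + 1) (derivative p)) (polyA m)
  simp only [derivative_sum, derivative_C, derivative_C_mul, eval_finset_sum, eval_mul,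
    eval_C, eval_zero] at h
  have hfac : (m.factorial : ℚ) ≠ 0 := by positivity
  have key : (∑ k ∈ range (m + 1), (-1 : ℚ) ^ k * (m.choose k : ℚ)
      * ((m + k + 1).choose (k + 1) : ℚ) * (H (m + k + 1) - H (k + 1))) * (m.factorial : ℚ)
      = 0 := by
    rw [Finset.sum_mul, ← h]
    refine Finset.sum_congr rfl fun k hk => ?_
    have hne : ∀ i ∈ range m, ((m : ℚ) + 1) + ((k : ℚ) - (i : ℚ)) ≠ 0 := by
      intro i hi
      have heq : ((m : ℚ) + 1) + ((k : ℚ) - (i : ℚ)) = ((m + 1 + k - i : ℕ) : ℚ) := by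
        rw [Nat.cast_sub (by simp at hi; omega)]
        push_cast; ring
      rw [heq]
      have : 0 < m + 1 + k - i := by simp at hi; omega
      exact_mod_cast (Nat.cast_pos.mpr this).ne'
    rw [eval_derivative_prod _ _ _ hne]
    have hprod : ∏ i ∈ range m, (((m : ℚ) + 1) + ((k : ℚ) - (i : ℚ)))
        = ((m + k + 1).choose (k + 1) : ℚ) * (m.factorial : ℚ) := by
      have h1 : ∏ i ∈ range m, (((m : ℚ) + 1) + ((k : ℚ) - (i : ℚ)))
          = ∏ i ∈ range m, (((m + k + 1 : ℕ) : ℚ) - (i : ℚ)) := by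
        refine Finset.prod_congr rfl fun i _ => by push_cast; ring
      have h2 : (m + k + 1).choose m = (m + k + 1).choose (k + 1) := by
        have h3 : k + 1 = (m + k + 1) - m := by omega
        rw [h3, Nat.choose_symm (by omega)]
      rw [h1, prod_desc (m + k + 1) m (by omega), ← h2,
        choose_form (show m ≤ m + k + 1 by omega)]
    have hsum : ∑ i ∈ range m, (((m : ℚ) + 1) + ((k : ℚ) - (i : ℚ)))⁻¹
        = H (m + k + 1) - H (k + 1) := by
      have h1 := Hdiff (k + 1) m
      have harg : k + 1 + m = m + k + 1 := by omega
      rw [harg] at h1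
      rw [h1, add_sub_cancel_left,
        ← Finset.sum_range_reflect (fun i => 1 / (((k + 1 : ℕ) : ℚ) + i + 1)) m]
      refine Finset.sum_congr rfl fun i hi => ?_
      simp only [one_div]
      congr 1
      rw [Nat.cast_sub (by simp at hi; omega), Nat.cast_sub (by simp at hi; omega)]
      push_cast; ring
    rw [hprod, hsum]
    ring
  exact (mul_eq_zero.mp key).resolve_right hfac

lemma idPsi (m : ℕ) :
    ∑ k ∈ range (m + 1), (-1 : ℚ) ^ k * (m.choose k : ℚ) * ((m + k + 1).choose (k + 1) : ℚ)
      = (-1 : ℚ) ^ m := by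
  simpa using Qid m m 1

lemma idB (m : ℕ) :
    ∑ k ∈ range (m + 1), (-1 : ℚ) ^ k * (m.choose k : ℚ) * ((m + k + 1).choose (k + 1) : ℚ)
      * (H (m + k + 1) - H m) = (-1 : ℚ) ^ m * H (m + 1) := by
  have h := congrArg (fun p => eval ((m : ℚ)) (derivative p)) (polyB m)
  simp only [derivative_sum, derivative_C_mul, eval_finset_sum, eval_mul, eval_C] at h
  have hmfac : (((m+1).factorial : ℕ) : ℚ) ≠ 0 := by positivity
  have hRne : ∀ i ∈ range (m + 1), (m : ℚ) + (1 - (i : ℚ)) ≠ 0 := by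
    intro i hi
    have heq : (m : ℚ) + (1 - (i : ℚ)) = ((m + 1 - i : ℕ) : ℚ) := by
      rw [Nat.cast_sub (by simp at hi; omega)]
      push_cast; ring
    rw [heq]
    have : 0 < m + 1 - i := by simp at hi; omega
    exact_mod_cast (Nat.cast_pos.mpr this).ne'
  rw [eval_derivative_prod _ _ _ hRne] at h
  have hRprod : ∏ i ∈ range (m + 1), ((m : ℚ) + (1 - (i : ℚ))) = ((m+1).factorial : ℚ) := by
    have h1 : ∏ i ∈ range (m + 1), ((m : ℚ) + (1 - (i : ℚ)))
        = ∏ i ∈ range (m + 1), (((m + 1 : ℕ) : ℚ) - (i : ℚ)) := by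
      refine Finset.prod_congr rfl fun i _ => by push_cast; ring
    rw [h1, prod_desc (m + 1) (m + 1) le_rfl]
    simp
  have hRsum : ∑ i ∈ range (m + 1), ((m : ℚ) + (1 - (i : ℚ)))⁻¹ = H (m + 1) := by
    have h0 : H 0 = 0 := by simp [H]
    have h1 := Hdiff 0 (m + 1)
    simp only [h0, Nat.cast_zero, zero_add, Nat.zero_add] at h1
    rw [h1, ← Finset.sum_range_reflect (fun i => 1 / ((i : ℚ) + 1)) (m + 1)]
    refine Finset.sum_congr rfl fun i hi => ?_
    simp only [one_div]
    congr 1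
    have h2 : m + 1 - 1 - i = m - i := by omega
    rw [h2, Nat.cast_sub (by simp at hi; omega)]
    ring
  rw [hRprod, hRsum] at h
  have hL : ∀ k ∈ range (m + 1),
      (-1 : ℚ) ^ k * (m.choose k : ℚ) / ((k+1).factorial : ℚ) *
        eval (m : ℚ) (derivative (∏ i ∈ range (k + 1), (X + C ((i : ℚ) + 1))))
      = (-1 : ℚ) ^ k * (m.choose k : ℚ) * ((m + k + 1).choose (k + 1) : ℚ)
          * (H (m + k + 1) - H m) := by
    intro k hk
    have hne : ∀ i ∈ range (k + 1), (m : ℚ) + ((i : ℚ) + 1) ≠ 0 := by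
      intro i hi
      positivity
    rw [eval_derivative_prod _ _ _ hne]
    have hprod : ∏ i ∈ range (k + 1), ((m : ℚ) + ((i : ℚ) + 1))
        = ((m + k + 1).choose (k + 1) : ℚ) * ((k+1).factorial : ℚ) := by
      have h1 : ∏ i ∈ range (k + 1), ((m : ℚ) + ((i : ℚ) + 1))
          = ∏ i ∈ range (k + 1), ((m : ℚ) + (i : ℚ) + 1) := by
        refine Finset.prod_congr rfl fun i _ => by ring
      have h2 := choose_form (show k + 1 ≤ m + (k + 1) by omega)
      simp only [Nat.add_sub_cancel] at h2
      rw [h1, prod_asc m (k + 1), ← h2]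
      have h3 : m + (k + 1) = m + k + 1 := by omega
      rw [h3]
    have hsum : ∑ i ∈ range (k + 1), ((m : ℚ) + ((i : ℚ) + 1))⁻¹ = H (m + k + 1) - H m := by
      have h1 := Hdiff m (k + 1)
      have harg : m + (k + 1) = m + k + 1 := by omega
      rw [harg] at h1
      rw [h1, add_sub_cancel_left]
      refine Finset.sum_congr rfl fun i _ => by rw [one_div]; congr 1; ring
    rw [hprod, hsum]
    have hkfac : ((k+1).factorial : ℚ) ≠ 0 := by positivity
    have key : ∀ a b c d : ℚ, c ≠ 0 → a / c * (b * c * d) = a * b * d := by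
      intros a b c d hc; field_simp
    exact key _ _ _ _ hkfac
  rw [Finset.sum_congr rfl hL] at h
  rw [h]
  field_simp

theorem main_identity_appendix_B (m : ℕ) (hm : 1 ≤ m) :
    ∑ n ∈ Finset.Icc 1 m,
        (1 / ((n : ℚ) + 1)) *
          (∑ j ∈ Finset.Icc 1 n,
            (-1 : ℚ) ^ (j - 1) * (Nat.choose (2 * j - 1) j : ℚ) *
              (Nat.choose (m + j) (2 * j - 1) : ℚ)) =
      (-1 : ℚ) ^ (m + 1) * H m := by
  set g : ℕ → ℚ := fun j =>
    (-1 : ℚ) ^ (j - 1) * (Nat.choose (2 * j - 1) j : ℚ) * (Nat.choose (m + j) (2 * j - 1) : ℚ)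
    with hg
  have step1 : ∑ n ∈ Finset.Icc 1 m, (1 / ((n : ℚ) + 1)) * ∑ j ∈ Finset.Icc 1 n, g j
      = ∑ j ∈ Finset.Icc 1 m, g j * ∑ n ∈ Finset.Icc j m, 1 / ((n : ℚ) + 1) := by
    have comm := Finset.sum_Ico_Ico_comm 1 (m + 1) fun j n => g j * (1 / ((n : ℚ) + 1))
    calc ∑ n ∈ Finset.Icc 1 m, 1 / ((n : ℚ) + 1) * ∑ j ∈ Finset.Icc 1 n, g j
        = ∑ n ∈ Finset.Ico 1 (m + 1), ∑ j ∈ Finset.Ico 1 (n + 1), g j * (1 / ((n : ℚ) + 1)) := by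
          rw [← Finset.Ico_add_one_right_eq_Icc 1 m]
          refine Finset.sum_congr rfl fun n _ => ?_
          rw [Finset.Ico_add_one_right_eq_Icc 1 n, Finset.mul_sum]
          exact Finset.sum_congr rfl fun j _ => mul_comm _ _
      _ = ∑ j ∈ Finset.Ico 1 (m + 1), ∑ n ∈ Finset.Ico j (m + 1), g j * (1 / ((n : ℚ) + 1)) :=
          comm.symm
      _ = ∑ j ∈ Finset.Icc 1 m, g j * ∑ n ∈ Finset.Icc j m, 1 / ((n : ℚ) + 1) := by
          rw [← Finset.Ico_add_one_right_eq_Icc 1 m]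
          refine Finset.sum_congr rfl fun j _ => ?_
          rw [Finset.Ico_add_one_right_eq_Icc j m, ← Finset.mul_sum]
  rw [step1]
  have hinner : ∀ j ∈ Finset.Icc 1 m,
      ∑ n ∈ Finset.Icc j m, 1 / ((n : ℚ) + 1) = H (m + 1) - H j := by
    intro j hj
    simp only [Finset.mem_Icc] at hj
    have h1 := Hdiff j (m + 1 - j)
    have harg : j + (m + 1 - j) = m + 1 := by omega
    rw [harg] at h1
    rw [h1, add_sub_cancel_left, ← Finset.Ico_add_one_right_eq_Icc,
      Finset.sum_Ico_eq_sum_range]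
    have harg2 : m + 1 - j = m + 1 - j := rfl
    refine Finset.sum_congr rfl fun i _ => ?_
    push_cast; ring
  rw [Finset.sum_congr rfl fun j hj => by rw [hinner j hj]]
  have hterm : ∀ j ∈ Finset.Icc 1 m,
      g j = (-1 : ℚ) ^ (j - 1) * (Nat.choose m (j - 1) : ℚ) * (Nat.choose (m + j) j : ℚ) := by
    intro j hj
    simp only [Finset.mem_Icc] at hj
    have hc := Nat.choose_mul (show j ≤ 2 * j - 1 by omega)
      (n := m + j)
    have h1 : m + j - j = m := by omega
    have h2 : 2 * j - 1 - j = j - 1 := by omega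
    rw [h1, h2] at hc
    simp only [hg]
    have hq : ((m + j).choose (2 * j - 1) : ℚ) * ((2 * j - 1).choose j : ℚ)
        = ((m + j).choose j : ℚ) * (m.choose (j - 1) : ℚ) := by exact_mod_cast hc
    linear_combination ((-1 : ℚ)) ^ (j - 1) * hq
  rw [Finset.sum_congr rfl fun j hj => by rw [hterm j hj]]
  rw [← Finset.Ico_add_one_right_eq_Icc, Finset.sum_Ico_eq_sum_range]
  have hms : m + 1 - 1 = m := by omega
  rw [hms]
  have hre : ∀ k ∈ range m,
      (-1 : ℚ) ^ (1 + k - 1) * (Nat.choose m (1 + k - 1) : ℚ) * (Nat.choose (m + (1 + k)) (1 + k) : ℚ)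
        * (H (m + 1) - H (1 + k))
      = (-1 : ℚ) ^ k * (m.choose k : ℚ) * ((m + k + 1).choose (k + 1) : ℚ)
        * (H (m + 1) - H (k + 1)) := by
    intro k _
    have e1 : 1 + k - 1 = k := by omega
    have e2 : m + (1 + k) = m + k + 1 := by omega
    have e3 : 1 + k = k + 1 := by omega
    rw [e1, e2, e3]
  rw [Finset.sum_congr rfl hre]
  -- extend to range (m+1)
  have hext : ∑ k ∈ range m, (-1 : ℚ) ^ k * (m.choose k : ℚ) * ((m + k + 1).choose (k + 1) : ℚ)
        * (H (m + 1) - H (k + 1))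
      = ∑ k ∈ range (m + 1), (-1 : ℚ) ^ k * (m.choose k : ℚ) * ((m + k + 1).choose (k + 1) : ℚ)
        * (H (m + 1) - H (k + 1)) := by
    rw [Finset.sum_range_succ]
    simp
  rw [hext]
  have hdecomp : ∀ k ∈ range (m + 1),
      (-1 : ℚ) ^ k * (m.choose k : ℚ) * ((m + k + 1).choose (k + 1) : ℚ)
        * (H (m + 1) - H (k + 1))
      = (-1 : ℚ) ^ k * (m.choose k : ℚ) * ((m + k + 1).choose (k + 1) : ℚ)
          * (H (m + k + 1) - H (k + 1))
        - (-1 : ℚ) ^ k * (m.choose k : ℚ) * ((m + k + 1).choose (k + 1) : ℚ)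
          * (H (m + k + 1) - H m)
        + (1 / ((m : ℚ) + 1)) * ((-1 : ℚ) ^ k * (m.choose k : ℚ) * ((m + k + 1).choose (k + 1) : ℚ)) := by
    intro k _
    have := Hsucc m
    rw [this]
    ring
  rw [Finset.sum_congr rfl hdecomp]
  rw [Finset.sum_add_distrib, Finset.sum_sub_distrib, idA m, idB m, ← Finset.mul_sum, idPsi m,
    Hsucc m]
  ring
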